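/- Let P_1, …, P_N be discrete probability measures on ℝ^d. Then for any weights λ_1, …, λ_N > 0 with ∑_{i=1}^N λ_i = 1, there exists a barycenter P̄ of P_1, …, P_N whose support satisfies |P̄| ≤ ∑_{i=1}^N |P_i| − N + 1. -/

import Mathlib

open MeasureTheory ENNReal

/-- Points of `ℝ^d`. -/
abbrev Pt (d : ℕ) := EuclideanSpace ℝ (Fin d)

/-- The set of atoms (support points) of a measure. -/
def msupp {α : Type*} [MeasurableSpace α] (P : Measure α) : Set α := {x | P {x} ≠ 0}

/-- A measure is finitely supported (discrete) if its set of atoms is finite and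
carries all the mass. -/
def FinitelySupported {α : Type*} [MeasurableSpace α] (P : Measure α) : Prop :=
  (msupp P).Finite ∧ P (msupp P)ᶜ = 0

/-- Finite second moment. -/
def FiniteSecondMoment {d : ℕ} (P : Measure (Pt d)) : Prop :=
  ∫⁻ x, ENNReal.ofReal (‖x‖ ^ 2) ∂P < ⊤

/-- The squared 2-Wasserstein distance: the infimum of `∫ ‖x - y‖² dπ` over all
couplings `π` of `P` and `Q`. -/
noncomputable def W2sq {d : ℕ} (P Q : Measure (Pt d)) : ℝ≥0∞ :=
  ⨅ π ∈ {π : Measure (Pt d × Pt d) | π.map Prod.fst = P ∧ π.map Prod.snd = Q},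
    ∫⁻ p, ENNReal.ofReal (‖p.1 - p.2‖ ^ 2) ∂π

/-- The barycenter objective `φ(P) = ∑ i, λ i * W₂(P, P i)²`. -/
noncomputable def phi {d N : ℕ} (l : Fin N → ℝ) (Pm : Fin N → Measure (Pt d))
    (P : Measure (Pt d)) : ℝ≥0∞ :=
  ∑ i, ENNReal.ofReal (l i) * W2sq P (Pm i)

/-- A (Wasserstein) barycenter: a probability measure with finite second moment
minimizing `φ` among all such measures. -/
def IsBarycenter {d N : ℕ} (l : Fin N → ℝ) (Pm : Fin N → Measure (Pt d))
    (P : Measure (Pt d)) : Prop :=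
  IsProbabilityMeasure P ∧ FiniteSecondMoment P ∧
    ∀ Q : Measure (Pt d), IsProbabilityMeasure Q → FiniteSecondMoment Q →
      phi l Pm P ≤ phi l Pm Q

/-- The set `S` of weighted centroids of combinations of support points,
one from each measure. -/
def centroidSet {d N : ℕ} (l : Fin N → ℝ) (Pm : Fin N → Measure (Pt d)) : Set (Pt d) :=
  {y | ∃ x : Fin N → Pt d, (∀ i, x i ∈ msupp (Pm i)) ∧ y = ∑ i, l i • x i}

/-- The union `S_org` of the supports of the measures. -/
def origSupport {d N : ℕ} (Pm : Fin N → Measure (Pt d)) : Set (Pt d) :=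
  ⋃ i, msupp (Pm i)

/-!
Barycenters are read off the multi-marginal linear program over plans `w` on `∏ i, supp P_i`
with marginals `P_i` and cost `c(t) = ∑ λ_i ‖m(t) - t_i‖²`, where `m(t) = ∑ λ_i t_i`.
Pushing a plan forward by `m` gives a measure `P̄` with `φ(P̄) ≤ c(w)`: couple `P̄` with `P_i`
along `t ↦ (m(t), t_i)`. Conversely, given `Q` and couplings `π_i` of `Q` and `P_i`,
disintegrating each `π_i` over `Q` and drawing the `t_i` independently gives a plan of cost at
most `∑ λ_i ∫ ‖x - y‖² dπ_i`, since `m(t)` minimizes `y ↦ ∑ λ_i ‖y - t_i‖²`. Hence the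
push-forward of an optimal plan is a barycenter with no more atoms than the plan has nonzero
weights. The marginal map has rank at most `∑ |P_i| - N + 1` (all `N` total masses agree), and
a linear program that attains its minimum attains it at a point whose support is at most the
rank: moving along a kernel direction inside the support keeps the cost, until a coordinate
vanishes.
-/

open Function Filter Topology
open Module (finrank)

section LinearProgram

variable {τ V : Type*} [Fintype τ] [AddCommGroup V] [Module ℝ V]

def feasibleSet (A : (τ → ℝ) →ₗ[ℝ] V) (p : V) : Set (τ → ℝ) := {w | 0 ≤ w ∧ A w = p}

theorem exists_ne_zero_map_eq_zero_support_subset (A : (τ → ℝ) →ₗ[ℝ] V) {w : τ → ℝ}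
    (h : finrank ℝ (LinearMap.range A) < (support w).ncard) :
    ∃ ξ, ξ ≠ 0 ∧ A ξ = 0 ∧ support ξ ⊆ support w := by
  classical
  -- a kernel vector of `Ψ` lies in `ker A` and vanishes off `support w`
  let Ψ := A.rangeRestrict.prod (LinearMap.funLeft ℝ ℝ (Subtype.val : {u // u ∉ support w} → τ))
  have hcard : (support w).ncard = Fintype.card {u // u ∈ support w} := by
    rw [← Nat.card_coe_set_eq, Nat.card_eq_fintype_card]
  have hker : LinearMap.ker Ψ ≠ ⊥ := by
    refine LinearMap.ker_ne_bot_of_finrank_lt ?_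
    have := Fintype.card_subtype_le (· ∈ support w)
    rw [Module.finrank_prod, Module.finrank_fintype_fun_eq_card,
      Module.finrank_fintype_fun_eq_card, Fintype.card_subtype_compl]
    omega
  obtain ⟨ξ, hξ, hne⟩ := Submodule.exists_mem_ne_zero_of_ne_bot hker
  simp only [LinearMap.mem_ker, Ψ, LinearMap.prod_apply, Function.prod, Prod.mk_eq_zero,
    funext_iff, LinearMap.funLeft_apply, Pi.zero_apply, Subtype.forall] at hξ
  refine ⟨ξ, hne, ?_, fun u hu => by_contra fun h => hu (hξ.2 u h)⟩
  exact LinearMap.mem_ker.mp (A.ker_rangeRestrict ▸ LinearMap.mem_ker.mpr hξ.1)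

theorem eventually_nonneg_add_smul {w ξ : τ → ℝ} (hw : 0 ≤ w) (hξ : support ξ ⊆ support w) :
    ∀ᶠ ε in 𝓝 (0 : ℝ), 0 ≤ w + ε • ξ := by
  simp only [Pi.le_def, eventually_all, Pi.add_apply, Pi.smul_apply, Pi.zero_apply, smul_eq_mul]
  intro u
  rcases (hw u).eq_or_lt with hu | hu
  · have : ξ u = 0 := notMem_support.mp fun h => hξ h hu.symm
    simp [← hu, this]
  · have : Tendsto (fun ε : ℝ => w u + ε * ξ u) (𝓝 0) (𝓝 (w u)) := by
      simpa using ((tendsto_id (x := 𝓝 (0 : ℝ))).mul_const (ξ u)).const_add (w u)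
    exact (this.eventually (lt_mem_nhds hu)).mono fun _ h => h.le

theorem IsMinOn.map_eq_zero_of_support_subset {A : (τ → ℝ) →ₗ[ℝ] V} {p : V}
    {c : (τ → ℝ) →ₗ[ℝ] ℝ} {w ξ : τ → ℝ} (hw : w ∈ feasibleSet A p)
    (hmin : IsMinOn c (feasibleSet A p) w) (hAξ : A ξ = 0) (hξ : support ξ ⊆ support w) :
    c ξ = 0 := by
  have hloc : IsLocalMin (fun ε : ℝ => c (w + ε • ξ)) 0 :=
    (eventually_nonneg_add_smul hw.1 hξ).mono fun ε hε => by
      simpa using hmin ⟨hε, by simp [hAξ, hw.2]⟩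
  refine hloc.hasDerivAt_eq_zero ?_
  simpa using (hasDerivAt_mul_const (c ξ)).const_add (c w)

theorem exists_pos_nonneg_add_smul_support_ssubset {w ξ : τ → ℝ} (hw : 0 ≤ w)
    (hξ : support ξ ⊆ support w) (hneg : ∃ u, ξ u < 0) :
    ∃ ε : ℝ, 0 < ε ∧ 0 ≤ w + ε • ξ ∧ support (w + ε • ξ) ⊂ support w := by
  classical
  obtain ⟨u₀, hu₀, hmin⟩ := ({u | ξ u < 0} : Finset τ).exists_min_image (fun u => w u / -ξ u)
    (by simpa [Finset.Nonempty] using hneg)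
  replace hu₀ : ξ u₀ < 0 := by simpa using hu₀
  have hwu₀ : 0 < w u₀ := (hw u₀).lt_of_ne' (hξ hu₀.ne)
  -- the largest step keeping `w + ε • ξ` nonnegative
  refine ⟨w u₀ / -ξ u₀, div_pos hwu₀ (neg_pos.mpr hu₀), fun u => ?_, ?_⟩
  · simp only [Pi.zero_apply, Pi.add_apply, Pi.smul_apply, smul_eq_mul]
    rcases le_or_gt 0 (ξ u) with hu | hu
    · have := mul_nonneg (div_pos hwu₀ (neg_pos.mpr hu₀)).le hu
      linarith [show 0 ≤ w u from hw u]
    · have := hmin u (by simpa using hu)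
      rw [le_div_iff₀ (neg_pos.mpr hu)] at this
      linarith
  · have hsub : support (w + (w u₀ / -ξ u₀) • ξ) ⊆ support w :=
      (support_add _ _).trans (Set.union_subset le_rfl ((support_smul_subset_right _ _).trans hξ))
    refine (Set.ssubset_iff_of_subset hsub).mpr ⟨u₀, hwu₀.ne', ?_⟩
    simp only [mem_support, Pi.add_apply, Pi.smul_apply, smul_eq_mul, not_not]
    rw [div_neg, neg_mul, div_mul_cancel₀ _ hu₀.ne, add_neg_cancel]

theorem exists_isMinOn_support_ssubset {A : (τ → ℝ) →ₗ[ℝ] V} {p : V}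
    {c : (τ → ℝ) →ₗ[ℝ] ℝ} {w : τ → ℝ} (hw : w ∈ feasibleSet A p)
    (hmin : IsMinOn c (feasibleSet A p) w) (h : finrank ℝ (LinearMap.range A) < (support w).ncard) :
    ∃ w' ∈ feasibleSet A p, IsMinOn c (feasibleSet A p) w' ∧ support w' ⊂ support w := by
  obtain ⟨ξ, hne, hAξ, hξ⟩ := exists_ne_zero_map_eq_zero_support_subset A h
  obtain ⟨ξ, hAξ, hξ, hneg⟩ : ∃ ξ, A ξ = 0 ∧ support ξ ⊆ support w ∧ ∃ u, ξ u < 0 := by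
    obtain ⟨u, hu⟩ := Function.ne_iff.mp hne
    rcases hu.lt_or_gt with hu | hu
    · exact ⟨ξ, hAξ, hξ, u, hu⟩
    · exact ⟨-ξ, by simp [hAξ], by simpa using hξ, u, by simpa using hu⟩
  obtain ⟨ε, -, hnonneg, hss⟩ := exists_pos_nonneg_add_smul_support_ssubset hw.1 hξ hneg
  have hcξ := hmin.map_eq_zero_of_support_subset hw hAξ hξ
  refine ⟨w + ε • ξ, ⟨hnonneg, by simp [hAξ, hw.2]⟩, fun x hx => ?_, hss⟩
  simpa [hcξ] using hmin hx

theorem exists_isMinOn_ncard_support_le {A : (τ → ℝ) →ₗ[ℝ] V} {p : V}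
    {c : (τ → ℝ) →ₗ[ℝ] ℝ} {w : τ → ℝ} (hw : w ∈ feasibleSet A p)
    (hmin : IsMinOn c (feasibleSet A p) w) :
    ∃ w' ∈ feasibleSet A p, IsMinOn c (feasibleSet A p) w' ∧
      (support w').ncard ≤ finrank ℝ (LinearMap.range A) := by
  induction hn : (support w).ncard using Nat.strong_induction_on generalizing w with
  | _ n ih =>
    by_cases h : n ≤ finrank ℝ (LinearMap.range A)
    · exact ⟨w, hw, hmin, hn ▸ h⟩
    obtain ⟨w', hw', hmin', hss⟩ := exists_isMinOn_support_ssubset hw hmin (by omega)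
    exact ih _ (hn ▸ Set.ncard_lt_ncard hss) hw' hmin' rfl

end LinearProgram

theorem Fintype.sum_prod_mul_eq_of_sum_eq_one {ι R : Type*} [Fintype ι] [DecidableEq ι]
    {β : ι → Type*} [∀ i, Fintype (β i)] [CommSemiring R] (f : ∀ i, β i → R) {i : ι}
    (g : β i → R) (hf : ∀ j ≠ i, ∑ s, f j s = 1) :
    ∑ t : ∀ j, β j, (∏ j, f j (t j)) * g (t i) = ∑ s, f i s * g s := by
  let f' := update f i fun s => f i s * g s
  have hprod (t : ∀ j, β j) : (∏ j, f j (t j)) * g (t i) = ∏ j, f' j (t j) := by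
    have hne (j) (hj : j ∈ ({i}ᶜ : Finset ι)) : f' j (t j) = f j (t j) := by
      simp [f', update_of_ne (show j ≠ i by simpa using hj)]
    rw [Fintype.prod_eq_mul_prod_compl i, Fintype.prod_eq_mul_prod_compl i (fun j => f' j (t j)),
      Finset.prod_congr rfl hne]
    simp only [f', update_self]
    ring
  have hone (j) (hj : j ∈ ({i}ᶜ : Finset ι)) : ∑ s, f' j s = 1 := by
    have hji : j ≠ i := by simpa using hj
    simp [f', update_of_ne hji, hf j hji]
  rw [Fintype.sum_congr _ _ hprod, ← Fintype.prod_sum, Fintype.prod_eq_mul_prod_compl i,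
    Finset.prod_eq_one hone]
  simp [f']

namespace MultiMarginal

variable {ι : Type*} [Fintype ι] [DecidableEq ι] {β : ι → Type*} [∀ i, Fintype (β i)]
  [∀ i, DecidableEq (β i)]

def marginals : ((∀ i, β i) → ℝ) →ₗ[ℝ] ∀ i, β i → ℝ :=
  LinearMap.pi fun i => LinearMap.pi fun s => ∑ t with t i = s, LinearMap.proj t

@[simp]
theorem marginals_apply (w : (∀ i, β i) → ℝ) (i : ι) (s : β i) :
    marginals w i s = ∑ t with t i = s, w t := by
  simp [marginals]

theorem sum_marginals_apply (w : (∀ i, β i) → ℝ) (i : ι) : ∑ s, marginals w i s = ∑ t, w t := by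
  simp [Finset.sum_fiberwise]

theorem finrank_range_marginals_add_card_le [∀ i, Nonempty (β i)] :
    finrank ℝ (LinearMap.range (marginals (β := β))) + Fintype.card ι ≤
      ∑ i, Fintype.card (β i) + 1 := by
  let r : ∀ i, β i := fun _ => Classical.arbitrary _
  -- the total mass and the masses off `r` already determine all marginals
  let B : ((∀ i, β i) → ℝ) →ₗ[ℝ] ℝ × ∀ i, {s // s ≠ r i} → ℝ :=
    (∑ t, LinearMap.proj t).prod
      (LinearMap.pi fun i => LinearMap.funLeft ℝ ℝ Subtype.val ∘ₗ LinearMap.proj i ∘ₗ marginals)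
  have hker : LinearMap.ker B ≤ LinearMap.ker marginals := by
    intro ξ hξ
    simp only [LinearMap.mem_ker, B, LinearMap.prod_apply, Function.prod, Prod.mk_eq_zero,
      funext_iff, LinearMap.coe_sum, Finset.sum_apply, LinearMap.coe_proj, eval, LinearMap.pi_apply,
      LinearMap.coe_comp, comp_apply, LinearMap.funLeft_apply, Pi.zero_apply, Subtype.forall] at hξ
    rw [LinearMap.mem_ker]
    ext i s
    by_cases hs : s = r i
    · have := sum_marginals_apply ξ i
      rw [← Finset.add_sum_erase _ _ (Finset.mem_univ (r i)),
        Finset.sum_eq_zero fun s hs => hξ.2 i s (Finset.mem_erase.mp hs).1] at this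
      simpa [hs, hξ.1] using this
    · exact hξ.2 i s hs
  have h1 := LinearMap.finrank_range_add_finrank_ker (marginals (β := β))
  have h2 := LinearMap.finrank_range_add_finrank_ker B
  have h3 := Submodule.finrank_mono hker
  have h4 := (LinearMap.range B).finrank_le
  rw [Module.finrank_prod, Module.finrank_self, Module.finrank_pi_fintype] at h4
  simp only [Module.finrank_fintype_fun_eq_card, Fintype.card_subtype_compl,
    Fintype.card_subtype_eq] at h4
  have h5 : ∑ i, (Fintype.card (β i) - 1) + Fintype.card ι = ∑ i, Fintype.card (β i) := by
    rw [Fintype.card_eq_sum_ones, ← Finset.sum_add_distrib]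
    exact Finset.sum_congr rfl fun i _ => Nat.sub_add_cancel Fintype.card_pos
  omega

theorem isCompact_feasibleSet_marginals [Nonempty ι] (b : ∀ i, β i → ℝ) :
    IsCompact (feasibleSet marginals b) := by
  obtain ⟨i₀⟩ := ‹Nonempty ι›
  refine (isCompact_Icc (a := 0) (b := fun t => b i₀ (t i₀))).of_isClosed_subset ?_ ?_
  · exact (isClosed_le continuous_const continuous_id).inter
      (isClosed_eq marginals.continuous_of_finiteDimensional continuous_const)
  · rintro w ⟨hw0, hwb⟩
    refine ⟨hw0, fun t => ?_⟩
    show w t ≤ b i₀ (t i₀)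
    rw [← hwb, marginals_apply]
    exact Finset.single_le_sum (fun t' _ => hw0 t') (by simp)

theorem prod_mem_feasibleSet_marginals {b : ∀ i, β i → ℝ} (hb0 : ∀ i s, 0 ≤ b i s)
    (hb1 : ∀ i, ∑ s, b i s = 1) : (fun t => ∏ i, b i (t i)) ∈ feasibleSet marginals b := by
  refine ⟨fun t => Finset.prod_nonneg fun i _ => hb0 i (t i), ?_⟩
  ext i s
  have := Fintype.sum_prod_mul_eq_of_sum_eq_one b (fun s' => if s' = s then (1 : ℝ) else 0)
    fun j _ => hb1 j
  simpa [Finset.sum_filter] using this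

theorem exists_isMinOn_ncard_support_add_card_le [Nonempty ι] {b : ∀ i, β i → ℝ}
    (hb0 : ∀ i s, 0 ≤ b i s) (hb1 : ∀ i, ∑ s, b i s = 1) (c : ((∀ i, β i) → ℝ) →ₗ[ℝ] ℝ) :
    ∃ w ∈ feasibleSet marginals b, IsMinOn c (feasibleSet marginals b) w ∧
      (support w).ncard + Fintype.card ι ≤ ∑ i, Fintype.card (β i) + 1 := by
  have (i : ι) : Nonempty (β i) := by
    by_contra h
    simpa [not_nonempty_iff.mp h] using hb1 i
  obtain ⟨w, hw, hmin⟩ := (isCompact_feasibleSet_marginals b).exists_isMinOn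
    ⟨_, prod_mem_feasibleSet_marginals hb0 hb1⟩ c.continuous_of_finiteDimensional.continuousOn
  obtain ⟨w', hw', hmin', hcard⟩ := exists_isMinOn_ncard_support_le hw hmin
  exact ⟨w', hw', hmin', by linarith [finrank_range_marginals_add_card_le (β := β)]⟩

end MultiMarginal

section Centroid

variable {ι E : Type*} [Fintype ι] [NormedAddCommGroup E] [InnerProductSpace ℝ E]

noncomputable def weightedMean (l : ι → ℝ) (x : ι → E) : E := ∑ i, l i • x i

theorem sum_mul_norm_sub_sq_eq {l : ι → ℝ} (hl : ∑ i, l i = 1) (x : ι → E) (y : E) :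
    ∑ i, l i * ‖y - x i‖ ^ 2 =
      ‖y - weightedMean l x‖ ^ 2 + ∑ i, l i * ‖weightedMean l x - x i‖ ^ 2 := by
  set m := weightedMean l x
  have hcross : ∑ i, l i * inner ℝ (y - m) (m - x i) = 0 := by
    simp_rw [← real_inner_smul_right, ← inner_sum, smul_sub, Finset.sum_sub_distrib,
      ← Finset.sum_smul, hl, one_smul, m, weightedMean, sub_self, inner_zero_right]
  have hsplit (i : ι) :
      ‖y - x i‖ ^ 2 = ‖y - m‖ ^ 2 + 2 * inner ℝ (y - m) (m - x i) + ‖m - x i‖ ^ 2 := by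
    rw [← norm_add_sq_real, sub_add_sub_cancel]
  simp_rw [hsplit, mul_add, Finset.sum_add_distrib, ← Finset.sum_mul, hl, mul_left_comm _ (2 : ℝ),
    ← Finset.mul_sum, hcross]
  ring

noncomputable def dispersion (l : ι → ℝ) (x : ι → E) : ℝ :=
  ∑ i, l i * ‖weightedMean l x - x i‖ ^ 2

theorem dispersion_nonneg {l : ι → ℝ} (hl : ∀ i, 0 ≤ l i) (x : ι → E) : 0 ≤ dispersion l x :=
  Finset.sum_nonneg fun i _ => mul_nonneg (hl i) (sq_nonneg _)

theorem dispersion_le {l : ι → ℝ} (hl : ∑ i, l i = 1) (x : ι → E) (y : E) :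
    dispersion l x ≤ ∑ i, l i * ‖y - x i‖ ^ 2 := by
  rw [dispersion, sum_mul_norm_sub_sq_eq hl x y]
  exact le_add_of_nonneg_left (sq_nonneg ‖y - weightedMean l x‖)

end Centroid

section WeightedDiracs

variable {τ X : Type*} [Fintype τ] [MeasurableSpace X]

noncomputable def weightedDiracs (w : τ → ℝ) (f : τ → X) : Measure X :=
  ∑ t, ENNReal.ofReal (w t) • Measure.dirac (f t)

theorem weightedDiracs_apply (w : τ → ℝ) (f : τ → X) {A : Set X} (hA : MeasurableSet A) :
    weightedDiracs w f A = ∑ t, ENNReal.ofReal (w t) * A.indicator 1 (f t) := by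
  simp [weightedDiracs, Measure.dirac_apply' _ hA]

theorem lintegral_weightedDiracs (w : τ → ℝ) (f : τ → X) {g : X → ℝ≥0∞} (hg : Measurable g) :
    ∫⁻ x, g x ∂weightedDiracs w f = ∑ t, ENNReal.ofReal (w t) * g (f t) := by
  simp [weightedDiracs, lintegral_dirac' _ hg]

theorem map_weightedDiracs (w : τ → ℝ) (f : τ → X) {Y : Type*} [MeasurableSpace Y] {g : X → Y}
    (hg : Measurable g) : (weightedDiracs w f).map g = weightedDiracs w (g ∘ f) := by
  simp [weightedDiracs, Measure.map_finset_sum hg.aemeasurable, Measure.map_smul,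
    Measure.map_dirac' hg]

theorem weightedDiracs_comp {σ : Type*} [Fintype σ] [DecidableEq σ] {w : τ → ℝ} (hw : 0 ≤ w)
    (p : τ → σ) (f : σ → X) :
    weightedDiracs w (f ∘ p) = weightedDiracs (fun s => ∑ t with p t = s, w t) f := by
  simp_rw [weightedDiracs, ENNReal.ofReal_sum_of_nonneg fun t _ => hw t, Finset.sum_smul]
  rw [← Finset.sum_fiberwise Finset.univ p]
  exact Finset.sum_congr rfl fun s _ => Finset.sum_congr rfl fun t ht => by
    rw [Function.comp_apply, (Finset.mem_filter.mp ht).2]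

theorem isProbabilityMeasure_weightedDiracs {w : τ → ℝ} (hw : 0 ≤ w) (h1 : ∑ t, w t = 1)
    (f : τ → X) : IsProbabilityMeasure (weightedDiracs w f) := by
  constructor
  rw [weightedDiracs_apply _ _ MeasurableSet.univ]
  simp [← ENNReal.ofReal_sum_of_nonneg fun t _ => hw t, h1]

theorem weightedDiracs_compl_image_support [MeasurableSingletonClass X] (w : τ → ℝ)
    (f : τ → X) : weightedDiracs w f (f '' support w)ᶜ = 0 := by
  rw [weightedDiracs_apply _ _ (Set.toFinite _).measurableSet.compl]
  refine Finset.sum_eq_zero fun t _ => ?_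
  by_cases ht : w t = 0
  · simp [ht]
  · rw [Set.indicator_of_notMem (not_not.mpr (Set.mem_image_of_mem f ht)), mul_zero]

theorem eq_weightedDiracs_of_measure_compl_eq_zero [MeasurableSingletonClass X] (P : Measure X)
    [IsFiniteMeasure P] (F : Finset X) (h : P (↑F)ᶜ = 0) :
    P = weightedDiracs (fun s : F => (P {(s : X)}).toReal) Subtype.val := by
  classical
  ext A hA
  have hAF : P (A \ F) = 0 := measure_mono_null (fun x hx => hx.2) h
  rw [← measure_inter_add_sdiff₀ A F.measurableSet.nullMeasurableSet, hAF, add_zero,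
    weightedDiracs_apply _ _ hA,
    Finset.sum_coe_sort F (fun s => ENNReal.ofReal (P {s}).toReal * A.indicator 1 s),
    Set.inter_comm, show (↑F ∩ A : Set X) = ↑{s ∈ F | s ∈ A} by ext; simp,
    ← sum_measure_singleton, Finset.sum_filter]
  refine Finset.sum_congr rfl fun s _ => ?_
  by_cases hs : s ∈ A <;> simp [hs, ENNReal.ofReal_toReal (measure_ne_top P _)]

end WeightedDiracs

section FiniteSupport

variable {X : Type*} [MeasurableSpace X]

theorem msupp_subset_of_measure_compl_eq_zero {P : Measure X} {s : Set X} (h : P sᶜ = 0) :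
    msupp P ⊆ s := fun _ hx =>
  by_contra fun hxs => hx (measure_mono_null (Set.singleton_subset_iff.mpr hxs) h)

theorem finitelySupported_of_measure_compl_eq_zero [MeasurableSingletonClass X] {P : Measure X}
    {s : Set X} (hs : s.Finite) (h : P sᶜ = 0) : FinitelySupported P := by
  refine ⟨hs.subset (msupp_subset_of_measure_compl_eq_zero h), measure_mono_null
    (fun x hx => ?_ : (msupp P)ᶜ ⊆ sᶜ ∪ ⋃ x ∈ s \ msupp P, {x}) ?_⟩
  · by_cases hxs : x ∈ s
    · exact Or.inr (Set.mem_biUnion ⟨hxs, hx⟩ rfl)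
    · exact Or.inl hxs
  · refine measure_union_null h ((measure_biUnion_null_iff hs.sdiff.countable).mpr fun x hx => ?_)
    simpa [msupp] using hx.2

theorem finitelySupported_weightedDiracs [MeasurableSingletonClass X] {τ : Type*} [Fintype τ]
    (w : τ → ℝ) (f : τ → X) : FinitelySupported (weightedDiracs w f) :=
  finitelySupported_of_measure_compl_eq_zero (Set.toFinite _)
    (weightedDiracs_compl_image_support w f)

theorem ncard_msupp_weightedDiracs_le [MeasurableSingletonClass X] {τ : Type*} [Fintype τ]
    (w : τ → ℝ) (f : τ → X) : (msupp (weightedDiracs w f)).ncard ≤ (support w).ncard :=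
  (Set.ncard_le_ncard (msupp_subset_of_measure_compl_eq_zero
    (weightedDiracs_compl_image_support w f))).trans (Set.ncard_image_le (Set.toFinite _))

end FiniteSupport

section Gluing

open MultiMarginal ProbabilityTheory

variable {ι X Y : Type*} [Fintype ι] [MeasurableSpace X] [MeasurableSpace Y] {S : ι → Finset Y}

theorem sum_prod_measure_singleton_mul [DecidableEq ι] [MeasurableSingletonClass Y]
    {μ : ι → Measure Y} (hμ : ∀ j, μ j (S j) = 1) (i : ι) (g : S i → ℝ≥0∞) :
    ∑ t : ∀ j, S j, (∏ j, μ j {(t j : Y)}) * g (t i) = ∑ s : S i, μ i {(s : Y)} * g s :=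
  Fintype.sum_prod_mul_eq_of_sum_eq_one (fun j (s : S j) => μ j {(s : Y)}) g fun j _ => by
    rw [Finset.sum_coe_sort (S j) fun s => μ j {s}, sum_measure_singleton, hμ j]

-- Draw `x ∼ Q`, then each `t j ∼ κ j x` independently.
noncomputable def gluedPlan (Q : Measure X) (κ : ι → Kernel X Y) (t : ∀ i, S i) : ℝ :=
  (∫⁻ x, ∏ j, κ j x {(t j : Y)} ∂Q).toReal

theorem measurable_prod_kernel_apply [MeasurableSingletonClass Y] (κ : ι → Kernel X Y)
    (t : ∀ i, S i) :
    Measurable fun x => ∏ j, κ j x {(t j : Y)} :=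
  Finset.measurable_prod _ fun _ _ => Kernel.measurable_coe _ (measurableSet_singleton _)

theorem lintegral_prod_kernel_apply_ne_top {Q : Measure X} [IsProbabilityMeasure Q]
    {κ : ι → Kernel X Y} [∀ i, IsMarkovKernel (κ i)] (t : ∀ i, S i) :
    ∫⁻ x, ∏ j, κ j x {(t j : Y)} ∂Q ≠ ⊤ := by
  refine ne_top_of_le_ne_top ENNReal.one_ne_top ?_
  calc ∫⁻ x, ∏ j, κ j x {(t j : Y)} ∂Q ≤ ∫⁻ _, 1 ∂Q :=
        lintegral_mono fun _ => Finset.prod_le_one' fun _ _ => prob_le_one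
    _ = 1 := by simp

theorem gluedPlan_mem_feasibleSet [DecidableEq ι] [DecidableEq Y] [MeasurableSingletonClass Y]
    {Q : Measure X} [IsProbabilityMeasure Q] {κ : ι → Kernel X Y} [∀ i, IsMarkovKernel (κ i)]
    (hκ : ∀ᵐ x ∂Q, ∀ i, κ i x (S i) = 1) :
    gluedPlan Q κ ∈ feasibleSet marginals fun i (s : S i) => (∫⁻ x, κ i x {(s : Y)} ∂Q).toReal := by
  refine ⟨fun t => ENNReal.toReal_nonneg, ?_⟩
  ext i s
  rw [marginals_apply]
  unfold gluedPlan
  rw [← ENNReal.toReal_sum fun t _ => lintegral_prod_kernel_apply_ne_top t,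
    ← lintegral_finsetSum _ fun t _ => measurable_prod_kernel_apply κ t]
  congr 1
  refine lintegral_congr_ae (hκ.mono fun x hx => ?_)
  simpa [Finset.sum_filter] using
    sum_prod_measure_singleton_mul hx i fun s' => if s' = s then 1 else 0

end Gluing

section Barycenter

open MultiMarginal ProbabilityTheory
open scoped Classical

variable {d N : ℕ}

noncomputable def masses (Pm : Fin N → Measure (Pt d)) (S : Fin N → Finset (Pt d)) (i : Fin N)
    (s : S i) : ℝ :=
  (Pm i {(s : Pt d)}).toReal

noncomputable def dispersionCost (l : Fin N → ℝ) (S : Fin N → Finset (Pt d)) :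
    ((∀ i, S i) → ℝ) →ₗ[ℝ] ℝ :=
  Fintype.linearCombination ℝ fun t => dispersion l fun i => (t i : Pt d)

noncomputable def centroidMeasure (l : Fin N → ℝ) (S : Fin N → Finset (Pt d))
    (w : (∀ i, S i) → ℝ) : Measure (Pt d) :=
  weightedDiracs w fun t => weightedMean l fun i => (t i : Pt d)

theorem sum_masses {Pm : Fin N → Measure (Pt d)} {S : Fin N → Finset (Pt d)} (i : Fin N)
    [IsProbabilityMeasure (Pm i)] (hS : Pm i (↑(S i))ᶜ = 0) : ∑ s, masses Pm S i s = 1 := by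
  rw [← ENNReal.toReal_one, ← prob_compl_eq_zero_iff (S i).measurableSet |>.mp hS,
    ← sum_measure_singleton, ENNReal.toReal_sum fun s _ => measure_ne_top _ _]
  exact Finset.sum_coe_sort (S i) fun s => (Pm i {s}).toReal

theorem map_snd_weightedDiracs_eq {Pm : Fin N → Measure (Pt d)} {S : Fin N → Finset (Pt d)}
    {w : (∀ i, S i) → ℝ} (hw : w ∈ feasibleSet marginals (masses Pm S)) (i : Fin N)
    [IsProbabilityMeasure (Pm i)] (hS : Pm i (↑(S i))ᶜ = 0) (g : (∀ i, S i) → Pt d) :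
    (weightedDiracs w fun t => (g t, (t i : Pt d))).map Prod.snd = Pm i := by
  rw [map_weightedDiracs _ _ measurable_snd, eq_weightedDiracs_of_measure_compl_eq_zero _ _ hS]
  refine (weightedDiracs_comp hw.1 (fun t => t i) Subtype.val).trans ?_
  congr 1
  ext s
  exact (marginals_apply w i s).symm.trans (congrFun (congrFun hw.2 i) s)

theorem finiteSecondMoment_weightedDiracs {τ : Type*} [Fintype τ] (w : τ → ℝ) (f : τ → Pt d) :
    FiniteSecondMoment (weightedDiracs w f) := by
  rw [FiniteSecondMoment, lintegral_weightedDiracs _ _ (by fun_prop)]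
  exact ENNReal.sum_lt_top.mpr fun t _ => ENNReal.mul_lt_top ENNReal.ofReal_lt_top
    ENNReal.ofReal_lt_top

theorem phi_centroidMeasure_le {l : Fin N → ℝ} (hl : ∀ i, 0 ≤ l i)
    {Pm : Fin N → Measure (Pt d)} {S : Fin N → Finset (Pt d)} [∀ i, IsProbabilityMeasure (Pm i)]
    (hS : ∀ i, Pm i (↑(S i))ᶜ = 0) {w : (∀ i, S i) → ℝ}
    (hw : w ∈ feasibleSet marginals (masses Pm S)) :
    phi l Pm (centroidMeasure l S w) ≤ ENNReal.ofReal (dispersionCost l S w) := by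
  set m : (∀ i, S i) → Pt d := fun t => weightedMean l fun i => (t i : Pt d)
  have hW (i : Fin N) : W2sq (centroidMeasure l S w) (Pm i) ≤
      ENNReal.ofReal (∑ t, w t * ‖m t - t i‖ ^ 2) := by
    let π := weightedDiracs w fun t => (m t, (t i : Pt d))
    have hπ : π.map Prod.fst = centroidMeasure l S w ∧ π.map Prod.snd = Pm i :=
      ⟨map_weightedDiracs _ _ measurable_fst, map_snd_weightedDiracs_eq hw i (hS i) m⟩
    refine (iInf₂_le π hπ).trans_eq ?_
    rw [lintegral_weightedDiracs _ _ (by fun_prop), ENNReal.ofReal_sum_of_nonneg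
      fun t _ => mul_nonneg (hw.1 t) (sq_nonneg _)]
    simp_rw [ENNReal.ofReal_mul (hw.1 _)]
  have hcost : dispersionCost l S w = ∑ i, l i * ∑ t, w t * ‖m t - t i‖ ^ 2 := by
    simp_rw [dispersionCost, Fintype.linearCombination_apply, dispersion, smul_eq_mul,
      Finset.mul_sum]
    rw [Finset.sum_comm]
    exact Finset.sum_congr rfl fun i _ => Finset.sum_congr rfl fun t _ => by ring
  calc phi l Pm (centroidMeasure l S w)
      ≤ ∑ i, ENNReal.ofReal (l i) * ENNReal.ofReal (∑ t, w t * ‖m t - t i‖ ^ 2) := by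
        unfold phi; gcongr with i; exact hW i
    _ = ENNReal.ofReal (dispersionCost l S w) := by
        rw [hcost, ENNReal.ofReal_sum_of_nonneg fun i _ => mul_nonneg (hl i)
          (Finset.sum_nonneg fun t _ => mul_nonneg (hw.1 t) (sq_nonneg _))]
        simp_rw [ENNReal.ofReal_mul (hl _)]

theorem sum_prod_mul_ofReal_dispersion_le {l : Fin N → ℝ} (hl : ∀ i, 0 ≤ l i)
    (hsum : ∑ i, l i = 1) {S : Fin N → Finset (Pt d)} {μ : Fin N → Measure (Pt d)}
    (hμ : ∀ j, μ j (S j) = 1) (x : Pt d) :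
    ∑ t : ∀ j, S j, (∏ j, μ j {(t j : Pt d)}) * ENNReal.ofReal (dispersion l fun i => (t i : Pt d))
      ≤ ∑ i, ENNReal.ofReal (l i) * ∫⁻ y, ENNReal.ofReal (‖x - y‖ ^ 2) ∂μ i := by
  calc _ ≤ ∑ t : ∀ j, S j, (∏ j, μ j {(t j : Pt d)}) *
          ∑ i, ENNReal.ofReal (l i) * ENNReal.ofReal (‖x - t i‖ ^ 2) := by
        gcongr with t
        simp_rw [← ENNReal.ofReal_mul (hl _)]
        rw [← ENNReal.ofReal_sum_of_nonneg fun i _ => mul_nonneg (hl i) (sq_nonneg _)]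
        exact ENNReal.ofReal_le_ofReal (dispersion_le hsum _ x)
    _ = ∑ i, ENNReal.ofReal (l i) * ∑ s : S i, μ i {(s : Pt d)} * ENNReal.ofReal (‖x - s‖ ^ 2) := by
        simp_rw [Finset.mul_sum, mul_left_comm _ (ENNReal.ofReal (l _))]
        rw [Finset.sum_comm]
        simp_rw [← Finset.mul_sum]
        congr! 2 with i
        exact sum_prod_measure_singleton_mul hμ i fun s => ENNReal.ofReal (‖x - s‖ ^ 2)
    _ ≤ ∑ i, ENNReal.ofReal (l i) * ∫⁻ y, ENNReal.ofReal (‖x - y‖ ^ 2) ∂μ i := by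
        gcongr with i
        rw [Finset.sum_coe_sort (S i) fun s => μ i {s} * ENNReal.ofReal (‖x - s‖ ^ 2)]
        simp_rw [mul_comm (μ i _)]
        rw [← lintegral_finset]
        exact setLIntegral_le_lintegral _ _

theorem ofReal_dispersionCost_gluedPlan_le {l : Fin N → ℝ} (hl : ∀ i, 0 ≤ l i)
    (hsum : ∑ i, l i = 1) {S : Fin N → Finset (Pt d)} {Q : Measure (Pt d)} [IsProbabilityMeasure Q]
    {κ : Fin N → Kernel (Pt d) (Pt d)} [∀ i, IsMarkovKernel (κ i)]
    (hκ : ∀ᵐ x ∂Q, ∀ i, κ i x (S i) = 1) :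
    ENNReal.ofReal (dispersionCost l S (gluedPlan Q κ)) ≤
      ∑ i, ENNReal.ofReal (l i) * ∫⁻ x, ∫⁻ y, ENNReal.ofReal (‖x - y‖ ^ 2) ∂κ i x ∂Q := by
  have hmeas (i : Fin N) : Measurable fun x => ∫⁻ y, ENNReal.ofReal (‖x - y‖ ^ 2) ∂κ i x :=
    Measurable.lintegral_kernel_prod_right (by fun_prop)
  calc ENNReal.ofReal (dispersionCost l S (gluedPlan Q κ))
      = ∑ t : ∀ j, S j, (∫⁻ x, ∏ j, κ j x {(t j : Pt d)} ∂Q) *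
          ENNReal.ofReal (dispersion l fun i => (t i : Pt d)) := by
        simp only [dispersionCost, Fintype.linearCombination_apply, smul_eq_mul, gluedPlan]
        rw [ENNReal.ofReal_sum_of_nonneg
          fun t _ => mul_nonneg ENNReal.toReal_nonneg (dispersion_nonneg hl _)]
        simp_rw [ENNReal.ofReal_mul ENNReal.toReal_nonneg,
          ENNReal.ofReal_toReal (lintegral_prod_kernel_apply_ne_top _)]
    _ = ∫⁻ x, ∑ t : ∀ j, S j, (∏ j, κ j x {(t j : Pt d)}) *
          ENNReal.ofReal (dispersion l fun i => (t i : Pt d)) ∂Q := by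
        rw [lintegral_finsetSum _ fun t _ => (measurable_prod_kernel_apply κ t).mul_const _]
        simp_rw [lintegral_mul_const _ (measurable_prod_kernel_apply κ _)]
    _ ≤ ∫⁻ x, ∑ i, ENNReal.ofReal (l i) * ∫⁻ y, ENNReal.ofReal (‖x - y‖ ^ 2) ∂κ i x ∂Q :=
        lintegral_mono_ae (hκ.mono fun x hx => sum_prod_mul_ofReal_dispersion_le hl hsum hx x)
    _ = ∑ i, ENNReal.ofReal (l i) * ∫⁻ x, ∫⁻ y, ENNReal.ofReal (‖x - y‖ ^ 2) ∂κ i x ∂Q := by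
        rw [lintegral_finsetSum _ fun i _ => (hmeas i).const_mul _]
        simp_rw [lintegral_const_mul _ (hmeas _)]

theorem exists_mem_feasibleSet_ofReal_dispersionCost_le {l : Fin N → ℝ} (hl : ∀ i, 0 ≤ l i)
    (hsum : ∑ i, l i = 1) {Pm : Fin N → Measure (Pt d)} {S : Fin N → Finset (Pt d)}
    (hS : ∀ i, Pm i (↑(S i))ᶜ = 0) {Q : Measure (Pt d)} [IsProbabilityMeasure Q]
    {π : Fin N → Measure (Pt d × Pt d)} (hπQ : ∀ i, (π i).map Prod.fst = Q)
    (hπP : ∀ i, (π i).map Prod.snd = Pm i) :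
    ∃ w ∈ feasibleSet marginals (masses Pm S), ENNReal.ofReal (dispersionCost l S w) ≤
      ∑ i, ENNReal.ofReal (l i) * ∫⁻ p, ENNReal.ofReal (‖p.1 - p.2‖ ^ 2) ∂π i := by
  have (i : Fin N) : IsProbabilityMeasure (π i) :=
    (Measure.isProbabilityMeasure_map_iff measurable_fst.aemeasurable).mp (hπQ i ▸ inferInstance)
  let κ i := (π i).condKernel
  have hκP (i : Fin N) {B : Set (Pt d)} (hB : MeasurableSet B) : ∫⁻ x, κ i x B ∂Q = Pm i B := by
    rw [← hπQ i, ← hπP i, Measure.map_apply measurable_snd hB]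
    exact Measure.lintegral_condKernel_mem (measurable_snd hB)
  have hκ : ∀ᵐ x ∂Q, ∀ i, κ i x (S i) = 1 := ae_all_iff.mpr fun i => by
    have h0 := hκP i (S i).measurableSet.compl
    rw [hS i, lintegral_eq_zero_iff (Kernel.measurable_coe _ (S i).measurableSet.compl)] at h0
    exact h0.mono fun x hx => (prob_compl_eq_zero_iff (S i).measurableSet).mp hx
  refine ⟨gluedPlan Q κ, ?_, (ofReal_dispersionCost_gluedPlan_le hl hsum hκ).trans_eq ?_⟩
  · convert gluedPlan_mem_feasibleSet hκ using 3 with i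
    ext s
    rw [hκP i (measurableSet_singleton _), masses]
  · refine Finset.sum_congr rfl fun i _ => ?_
    rw [← hπQ i]
    exact congrArg _ (Measure.lintegral_condKernel (ρ := π i)
      (f := fun p => ENNReal.ofReal (‖p.1 - p.2‖ ^ 2)) (by fun_prop))

theorem le_phi_of_forall_couplings {l : Fin N → ℝ} (hl : ∀ i, 0 < l i)
    (hsum : ∑ i, l i = 1) {Pm : Fin N → Measure (Pt d)} {Q : Measure (Pt d)} {a : ℝ≥0∞}
    (h : ∀ π : Fin N → Measure (Pt d × Pt d), (∀ i, (π i).map Prod.fst = Q) →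
      (∀ i, (π i).map Prod.snd = Pm i) →
      a ≤ ∑ i, ENNReal.ofReal (l i) * ∫⁻ p, ENNReal.ofReal (‖p.1 - p.2‖ ^ 2) ∂π i) :
    a ≤ phi l Pm Q := by
  refine ENNReal.le_of_forall_pos_le_add fun ε hε hphi => ?_
  have hnear (i : Fin N) : ∃ π : Measure (Pt d × Pt d),
      (π.map Prod.fst = Q ∧ π.map Prod.snd = Pm i) ∧
      ∫⁻ p, ENNReal.ofReal (‖p.1 - p.2‖ ^ 2) ∂π < W2sq Q (Pm i) + ε := by
    have hW : W2sq Q (Pm i) ≠ ⊤ := by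
      refine (ENNReal.lt_top_of_mul_ne_top_right ?_ (ENNReal.ofReal_pos.mpr (hl i)).ne').ne
      exact ne_top_of_le_ne_top hphi.ne (Finset.single_le_sum
        (f := fun i => ENNReal.ofReal (l i) * W2sq Q (Pm i)) (fun _ _ => bot_le)
        (Finset.mem_univ i))
    have := ENNReal.lt_add_right hW (ENNReal.coe_ne_zero.mpr hε.ne')
    simpa only [W2sq, iInf_lt_iff, exists_prop, Set.mem_ofPred_eq] using this
  choose π hπ hπW using hnear
  have hl1 : ∑ i, ENNReal.ofReal (l i) = 1 := by
    rw [← ENNReal.ofReal_sum_of_nonneg fun i _ => (hl i).le, hsum, ENNReal.ofReal_one]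
  calc a ≤ ∑ i, ENNReal.ofReal (l i) * ∫⁻ p, ENNReal.ofReal (‖p.1 - p.2‖ ^ 2) ∂π i :=
        h π (fun i => (hπ i).1) (fun i => (hπ i).2)
    _ ≤ ∑ i, ENNReal.ofReal (l i) * (W2sq Q (Pm i) + ε) := by
        gcongr with i
        exact (hπW i).le
    _ = phi l Pm Q + ε := by
        simp_rw [mul_add]
        rw [Finset.sum_add_distrib, ← Finset.sum_mul, hl1, one_mul, phi]

theorem isBarycenter_centroidMeasure [Nonempty (Fin N)] {l : Fin N → ℝ} (hl : ∀ i, 0 < l i)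
    (hsum : ∑ i, l i = 1) {Pm : Fin N → Measure (Pt d)} [∀ i, IsProbabilityMeasure (Pm i)]
    {S : Fin N → Finset (Pt d)} (hS : ∀ i, Pm i (↑(S i))ᶜ = 0) {w : (∀ i, S i) → ℝ}
    (hw : w ∈ feasibleSet marginals (masses Pm S))
    (hmin : IsMinOn (dispersionCost l S) (feasibleSet marginals (masses Pm S)) w) :
    IsBarycenter l Pm (centroidMeasure l S w) := by
  have hw1 : ∑ t, w t = 1 := by
    rw [← sum_marginals_apply w (Classical.arbitrary _), hw.2, sum_masses _ (hS _)]
  refine ⟨isProbabilityMeasure_weightedDiracs hw.1 hw1 _, finiteSecondMoment_weightedDiracs _ _,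
    fun Q _ _ => (phi_centroidMeasure_le (fun i => (hl i).le) hS hw).trans ?_⟩
  refine le_phi_of_forall_couplings hl hsum fun π hπQ hπP => ?_
  obtain ⟨w', hw', hle⟩ :=
    exists_mem_feasibleSet_ofReal_dispersionCost_le (fun i => (hl i).le) hsum hS hπQ hπP
  exact (ENNReal.ofReal_le_ofReal (hmin hw')).trans hle

end Barycenter

/-- there exists a sparse barycenter, with at most
`∑ i, |P i| - N + 1` support points. -/
theorem exists_sparse_barycenter {d N : ℕ}
    (l : Fin N → ℝ) (Pm : Fin N → Measure (Pt d))
    (hl : ∀ i, 0 < l i) (hsum : ∑ i, l i = 1)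
    (hprob : ∀ i, IsProbabilityMeasure (Pm i))
    (hfin : ∀ i, FinitelySupported (Pm i)) :
    ∃ Pbar : Measure (Pt d), IsBarycenter l Pm Pbar ∧ FinitelySupported Pbar ∧
      (msupp Pbar).ncard ≤ (∑ i, (msupp (Pm i)).ncard) - N + 1 := by
  classical
  have : Nonempty (Fin N) :=
    Fin.pos_iff_nonempty.mp (Nat.pos_of_ne_zero fun h => by subst h; simp at hsum)
  let S i := (hfin i).1.toFinset
  have hS i : Pm i (↑(S i))ᶜ = 0 := by simpa [S] using (hfin i).2
  obtain ⟨w, hw, hmin, hcard⟩ := MultiMarginal.exists_isMinOn_ncard_support_add_card_le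
    (b := masses Pm S) (fun _ _ => ENNReal.toReal_nonneg) (fun i => sum_masses i (hS i))
    (dispersionCost l S)
  refine ⟨centroidMeasure l S w, isBarycenter_centroidMeasure hl hsum hS hw hmin,
    finitelySupported_weightedDiracs _ _, ?_⟩
  have hatoms : (msupp (centroidMeasure l S w)).ncard ≤ (support w).ncard :=
    ncard_msupp_weightedDiracs_le _ _
  have hsupp : ∑ i, Fintype.card (S i) = ∑ i, (msupp (Pm i)).ncard :=
    Finset.sum_congr rfl fun i _ => by simp [S, Set.ncard_eq_toFinset_card _ (hfin i).1]
  rw [Fintype.card_fin] at hcard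
  omega
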